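/- arXiv:2510.10902 — 2 statements merged into one kernel-verified Lean document; each statement's English description precedes it below -/
import Mathlib

section
/- Let $A \in \mathbb{R}^{n\times n}$ be symmetric positive semidefinite and $q \in \mathrm{range}(A)$. Then $\mathrm{pdet}(A + qq^\top) = \mathrm{pdet}(A)\,(1 + q^\top A^+ q)$, where $\mathrm{pdet}$ denotes the pseudo-determinant (product of nonzero eigenvalues) and $A^+$ the Moore–Penrose pseudoinverse. -/
open Matrix
open scoped Classical

/-- The pseudo-determinant of a real square matrix: the product of the nonzero eigenvalues
if the matrix is symmetric (Hermitian), and (junk value) `0` otherwise. For the zero matrix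
the empty product gives `1`. -/
noncomputable def pdet {n : ℕ} (A : Matrix (Fin n) (Fin n) ℝ) : ℝ :=
  if h : A.IsHermitian then
    ∏ i : Fin n, (if h.eigenvalues i = 0 then 1 else h.eigenvalues i)
  else 0

/-- `B` satisfies the four Penrose conditions for being the Moore–Penrose pseudoinverse
of `A` (over `ℝ`, where conjugate-transpose is transpose). -/
def IsMoorePenroseInverse {n : ℕ} (A B : Matrix (Fin n) (Fin n) ℝ) : Prop :=
  A * B * A = A ∧ B * A * B = B ∧ (A * B)ᵀ = A * B ∧ (B * A)ᵀ = B * A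

/-!
Diagonalize `A = U D Uᵀ` and write `q = A y = U (D z)` with `z = Uᵀ y`, so that
`A + q qᵀ = U (D + (D z)(D z)ᵀ) Uᵀ`. Both `D` and `D + (D z)(D z)ᵀ` vanish outside the rows and
columns `S` on which `D` is nonzero, so their characteristic polynomials are those of their
`S`-blocks times a power of `X`; when that block is invertible, the pseudo-determinant is its
determinant. On `S`, `D + (D z)(D z)ᵀ = D (1 + z (D z)ᵀ)` has determinant `det D · (1 + zᵀ D z)`,
and `zᵀ D z = yᵀ A y = qᵀ A⁺ q` because `A A⁺ A = A`; positive semidefiniteness keeps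
`1 + zᵀ D z` away from zero.
-/

open Polynomial

theorem Polynomial.prod_filter_roots_mul_X_pow {K : Type*} [Field K] [DecidableEq K] {f : K[X]}
    (hf : f ≠ 0) (k : ℕ) :
    ((f * X ^ k).roots.filter (· ≠ 0)).prod = (f.roots.filter (· ≠ 0)).prod := by
  rw [roots_mul (mul_ne_zero hf (pow_ne_zero _ X_ne_zero)), roots_X_pow, Multiset.filter_add,
    (Multiset.filter_eq_nil (s := k • {0})).mpr (by simp), add_zero]

namespace Matrix

theorem prod_filter_roots_charpoly_eq_det {K ι : Type*} [Field K] [DecidableEq K] [Fintype ι]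
    [DecidableEq ι] {N : Matrix ι ι K} (hN : N.charpoly.Splits) (hdet : N.det ≠ 0) :
    (N.charpoly.roots.filter (· ≠ 0)).prod = N.det := by
  rw [det_eq_prod_roots_charpoly_of_splits hN] at hdet ⊢
  exact congrArg _ <| Multiset.filter_eq_self.mpr fun x hx hx0 =>
    hdet (Multiset.prod_eq_zero (hx0 ▸ hx))

theorem charpoly_eq_charpoly_submatrix_mul_X_pow {R ι : Type*} [CommRing R] [Fintype ι]
    [DecidableEq ι] (M : Matrix ι ι R) (S : ι → Prop) [DecidablePred S]
    (hS : ∀ i, ¬ S i → ∀ j, M i j = 0) :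
    M.charpoly = (M.submatrix ((↑) : {i // S i} → ι) (↑)).charpoly *
      X ^ Fintype.card {i // ¬ S i} := by
  have hblocks : reindex (Equiv.sumCompl S).symm (Equiv.sumCompl S).symm M =
      fromBlocks (M.submatrix (↑) (↑)) (M.submatrix (↑) (↑)) 0 0 := by
    ext (i | i) (j | j)
    · rfl
    · rfl
    · exact hS i i.2 _
    · exact hS i i.2 _
  rw [← charpoly_reindex (Equiv.sumCompl S).symm M, hblocks, charpoly_fromBlocks_zero₂₁]
  simp

theorem det_diagonal_add_vecMulVec_mul {R ι : Type*} [CommRing R] [Fintype ι] [DecidableEq ι]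
    (d z : ι → R) :
    (diagonal d + vecMulVec (d * z) (d * z)).det = (diagonal d).det * (1 + z ⬝ᵥ (d * z)) := by
  have hfactor :
      diagonal d + vecMulVec (d * z) (d * z) = diagonal d * (1 + vecMulVec z (d * z)) := by
    rw [Matrix.mul_add, Matrix.mul_one, mul_vecMulVec, funext (mulVec_diagonal d z)]
    rfl
  rw [hfactor, det_mul, vecMulVec_eq Unit, det_one_add_replicateCol_mul_replicateRow,
    dotProduct_comm]

theorem isHermitian_vecMulVec_self {α ι : Type*} [Mul α] [StarMul α] [TrivialStar α]
    (v : ι → α) : (vecMulVec v v).IsHermitian := by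
  rw [IsHermitian, conjTranspose_vecMulVec, star_trivial]

theorem mul_vecMulVec_mul_transpose {α ι : Type*} [CommSemiring α] [Fintype ι]
    (U : Matrix ι ι α) (v w : ι → α) :
    U * vecMulVec v w * Uᵀ = vecMulVec (U *ᵥ v) (U *ᵥ w) := by
  rw [mul_vecMulVec, vecMulVec_mul, vecMul_transpose]

theorem IsHermitian.spectral_theorem_real {ι : Type*} [Fintype ι] [DecidableEq ι]
    {A : Matrix ι ι ℝ} (hA : A.IsHermitian) :
    A = (hA.eigenvectorUnitary : Matrix ι ι ℝ) * diagonal hA.eigenvalues *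
      (hA.eigenvectorUnitary : Matrix ι ι ℝ)ᵀ := by
  simpa [star_eq_conjTranspose] using hA.spectral_theorem

theorem IsHermitian.pdet_eq_prod_filter_roots {n : ℕ} {M : Matrix (Fin n) (Fin n) ℝ}
    (hM : M.IsHermitian) : pdet M = (M.charpoly.roots.filter (· ≠ 0)).prod := by
  rw [pdet, dif_pos hM, hM.roots_charpoly_eq_eigenvalues, Multiset.filter_map,
    ← Finset.filter_val, ← Finset.prod_eq_multiset_prod, Finset.prod_filter]
  simp [ite_not]

theorem IsHermitian.pdet_conj_orthogonal {n : ℕ} {M U : Matrix (Fin n) (Fin n) ℝ}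
    (hM : M.IsHermitian) (hU : Uᵀ * U = 1) : pdet (U * M * Uᵀ) = pdet M := by
  have hconj : (U * M * Uᵀ).IsHermitian := by
    simpa using isHermitian_mul_mul_conjTranspose U hM
  rw [hconj.pdet_eq_prod_filter_roots, hM.pdet_eq_prod_filter_roots, charpoly_mul_comm,
    ← Matrix.mul_assoc, hU, Matrix.one_mul]

end Matrix

theorem pdet_eq_det_submatrix {n : ℕ} {E : Matrix (Fin n) (Fin n) ℝ} (hE : E.IsHermitian)
    (S : Fin n → Prop) [DecidablePred S] (hS : ∀ i, ¬ S i → ∀ j, E i j = 0)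
    (hdet : (E.submatrix ((↑) : {i // S i} → Fin n) (↑)).det ≠ 0) :
    pdet E = (E.submatrix ((↑) : {i // S i} → Fin n) (↑)).det := by
  rw [hE.pdet_eq_prod_filter_roots, charpoly_eq_charpoly_submatrix_mul_X_pow E S hS,
    prod_filter_roots_mul_X_pow (charpoly_monic _).ne_zero,
    prod_filter_roots_charpoly_eq_det (hE.submatrix _).splits_charpoly hdet]

theorem pdet_diagonal_add_vecMulVec_mul {n : ℕ} (d z : Fin n → ℝ) (h : 1 + z ⬝ᵥ (d * z) ≠ 0) :
    pdet (diagonal d + vecMulVec (d * z) (d * z)) = pdet (diagonal d) * (1 + z ⬝ᵥ (d * z)) := by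
  let S : Fin n → Prop := (d · ≠ 0)
  let ι : {i // S i} → Fin n := (↑)
  have hsub_diag : (diagonal d).submatrix ι ι = diagonal (d ∘ ι) :=
    submatrix_diagonal d ι Subtype.val_injective
  have hsub : (diagonal d + vecMulVec (d * z) (d * z)).submatrix ι ι =
      diagonal (d ∘ ι) + vecMulVec ((d ∘ ι) * (z ∘ ι)) ((d ∘ ι) * (z ∘ ι)) := by
    rw [← hsub_diag]
    rfl
  have hdet_diag : (diagonal (d ∘ ι)).det ≠ 0 := by
    rw [det_diagonal]
    exact Finset.prod_ne_zero_iff.mpr fun i _ => i.2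
  have hdot : (z ∘ ι) ⬝ᵥ ((d ∘ ι) * (z ∘ ι)) = z ⬝ᵥ (d * z) := by
    have hzero : ∑ i : {i // ¬ S i}, z i * (d * z) i = 0 :=
      Finset.sum_eq_zero fun i _ => by rw [Pi.mul_apply, not_not.mp i.2]; ring
    rw [dotProduct, dotProduct, ← Fintype.sum_subtype_add_sum_subtype S, hzero, add_zero]
    rfl
  have hdet : ((diagonal d + vecMulVec (d * z) (d * z)).submatrix ι ι).det =
      (diagonal (d ∘ ι)).det * (1 + z ⬝ᵥ (d * z)) := by
    rw [hsub, det_diagonal_add_vecMulVec_mul, hdot]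
  have hsupport_diag : ∀ i, ¬ S i → ∀ j, diagonal d i j = 0 := fun i hi j => by
    rw [diagonal_apply, not_not.mp hi, ite_self]
  have hsupport : ∀ i, ¬ S i → ∀ j, (diagonal d + vecMulVec (d * z) (d * z)) i j = 0 :=
    fun i hi j => by
      rw [Matrix.add_apply, hsupport_diag i hi, vecMulVec_apply, Pi.mul_apply, not_not.mp hi]
      ring
  rw [pdet_eq_det_submatrix ((isHermitian_diagonal d).add (isHermitian_vecMulVec_self _)) S
      hsupport (hdet ▸ mul_ne_zero hdet_diag h),
    pdet_eq_det_submatrix (isHermitian_diagonal d) S hsupport_diag (hsub_diag ▸ hdet_diag),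
    hdet, hsub_diag]

theorem IsMoorePenroseInverse.mulVec_dotProduct_mulVec_mulVec {n : ℕ}
    {A Ap : Matrix (Fin n) (Fin n) ℝ} (hAp : IsMoorePenroseInverse A Ap) (hA : Aᵀ = A)
    (y : Fin n → ℝ) : (A *ᵥ y) ⬝ᵥ (Ap *ᵥ (A *ᵥ y)) = y ⬝ᵥ (A *ᵥ y) := by
  rw [dotProduct_comm, dotProduct_mulVec, ← mulVec_transpose, hA, mulVec_mulVec, mulVec_mulVec,
    hAp.1, dotProduct_comm]

/-- For symmetric positive semidefinite `A` and `q` in the range of `A`,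
`pdet (A + q qᵀ) = pdet A * (1 + qᵀ A⁺ q)`, where `A⁺` is the Moore–Penrose pseudoinverse. -/
theorem pdet_add_outer_of_mem_range {n : ℕ} (A Ap : Matrix (Fin n) (Fin n) ℝ)
    (hA : A.PosSemidef) (hAp : IsMoorePenroseInverse A Ap)
    (q : Fin n → ℝ) (hq : ∃ y, A *ᵥ y = q) :
    pdet (A + vecMulVec q q) = pdet A * (1 + q ⬝ᵥ (Ap *ᵥ q)) := by
  obtain ⟨y, rfl⟩ := hq
  have hH := hA.isHermitian
  let U : Matrix (Fin n) (Fin n) ℝ := hH.eigenvectorUnitary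
  have hU : Uᵀ * U = 1 := by
    simpa [U, star_eq_conjTranspose] using Unitary.coe_star_mul_self hH.eigenvectorUnitary
  let d := hH.eigenvalues
  let z := Uᵀ *ᵥ y
  have hspec : A = U * diagonal d * Uᵀ := hH.spectral_theorem_real
  have hAy : A *ᵥ y = U *ᵥ (d * z) := by
    conv_lhs => rw [hspec]
    rw [← mulVec_mulVec, ← mulVec_mulVec, funext (mulVec_diagonal d z)]
    rfl
  have hquad : y ⬝ᵥ (A *ᵥ y) = z ⬝ᵥ (d * z) := by
    rw [hAy, dotProduct_mulVec, ← mulVec_transpose]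
  have hupdate : A + vecMulVec (A *ᵥ y) (A *ᵥ y) =
      U * (diagonal d + vecMulVec (d * z) (d * z)) * Uᵀ := by
    rw [Matrix.mul_add, Matrix.add_mul, mul_vecMulVec_mul_transpose, ← hspec, hAy]
  have hnonneg : 0 ≤ z ⬝ᵥ (d * z) := by
    simpa [hquad] using hA.dotProduct_mulVec_nonneg y
  rw [hAp.mulVec_dotProduct_mulVec_mulVec (by simpa using hH.eq), hquad, hupdate,
    ((isHermitian_diagonal d).add (isHermitian_vecMulVec_self _)).pdet_conj_orthogonal hU,
    pdet_diagonal_add_vecMulVec_mul d z (by positivity),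
    ← (isHermitian_diagonal d).pdet_conj_orthogonal hU, ← hspec]
end

section
/- Consider mini-batch SGD where $\theta_{i+1} = \theta_i - \eta \hat g_i$ for $i = 0,\dots,N_r-1$, with $\theta_0$ independent of the membership indicator $T_j$ (so $I[T_j;\theta_0]=0$). Then for any function $\mathcal{F}$, $I[T_j; \mathcal{F}(\theta_{N_r})] \le \sum_{i=0}^{N_r-1} I[T_j; \hat g_i \mid \theta_i]$. -/
open Finset

/-- Probability that the (discrete) random variable `X` on the finite space `Ω`
with mass function `p` takes the value `a`. -/
noncomputable def pmass {Ω α : Type*} [Fintype Ω] [DecidableEq α]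
    (p : Ω → ℝ) (X : Ω → α) (a : α) : ℝ :=
  ∑ ω, if X ω = a then p ω else 0

/-- Shannon entropy of a discrete random variable (convention `0 log 0 = 0`,
automatic since `Real.log 0 = 0`). -/
noncomputable def entropy {Ω α : Type*} [Fintype Ω] [Fintype α] [DecidableEq α]
    (p : Ω → ℝ) (X : Ω → α) : ℝ :=
  -∑ a, pmass p X a * Real.log (pmass p X a)

/-- Mutual information `I(X; Y) = H(X) + H(Y) - H(X, Y)`. -/
noncomputable def mutualInfo {Ω α β : Type*} [Fintype Ω]
    [Fintype α] [DecidableEq α] [Fintype β] [DecidableEq β]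
    (p : Ω → ℝ) (X : Ω → α) (Y : Ω → β) : ℝ :=
  entropy p X + entropy p Y - entropy p fun ω => (X ω, Y ω)

/-- Conditional entropy `H(Y ∣ X) = H(Y, X) - H(X)`. -/
noncomputable def condEntropy {Ω α β : Type*} [Fintype Ω]
    [Fintype α] [DecidableEq α] [Fintype β] [DecidableEq β]
    (p : Ω → ℝ) (Y : Ω → β) (X : Ω → α) : ℝ :=
  entropy p (fun ω => (Y ω, X ω)) - entropy p X

/-- Conditional mutual information
`I(T; Y ∣ X) = H(T, X) + H(Y, X) - H(X) - H(T, Y, X)`. -/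
noncomputable def condMutualInfo {Ω α β γ : Type*} [Fintype Ω]
    [Fintype α] [DecidableEq α] [Fintype β] [DecidableEq β] [Fintype γ] [DecidableEq γ]
    (p : Ω → ℝ) (T : Ω → γ) (Y : Ω → β) (X : Ω → α) : ℝ :=
  entropy p (fun ω => (T ω, X ω)) + entropy p (fun ω => (Y ω, X ω))
    - entropy p X - entropy p fun ω => (T ω, Y ω, X ω)

/-- The mass function obtained by conditioning `p` on the event `E`. -/
noncomputable def condPMF {Ω : Type*} [Fintype Ω]
    (p : Ω → ℝ) (E : Ω → Prop) [DecidablePred E] : Ω → ℝ :=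
  fun ω => if E ω then p ω / (∑ ω' ∈ univ.filter E, p ω') else 0

/-! Each update is a deterministic function of `(ĝ_i, θ_i)`, so by data processing
`I[T; θ_{i+1}] ≤ I[T; (ĝ_i, θ_i)]`, and by the chain rule the right side is
`I[T; θ_i] + I[T; ĝ_i ∣ θ_i]`. Telescoping from `I[T; θ_0] = 0` and one more data processing
step for `F` give the bound. Data processing itself is the chain rule plus nonnegativity of
conditional mutual information, which is Gibbs' inequality for the joint law of `(T, Y, X)`
against `P(T, X) P(Y, X) / P(X)`. -/

theorem Real.sum_mul_log_le_sum_mul_log {ι : Type*} (s : Finset ι) {q r : ι → ℝ}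
    (hq : ∀ i ∈ s, 0 ≤ q i) (hr : ∀ i ∈ s, 0 ≤ r i) (hqr : ∀ i ∈ s, 0 < q i → 0 < r i)
    (hsum : ∑ i ∈ s, r i ≤ ∑ i ∈ s, q i) :
    ∑ i ∈ s, q i * Real.log (r i) ≤ ∑ i ∈ s, q i * Real.log (q i) := by
  have hterm : ∀ i ∈ s, q i * Real.log (r i) - q i * Real.log (q i) ≤ r i - q i := by
    intro i hi
    rcases (hq i hi).eq_or_lt with hq0 | hqpos
    · simpa [← hq0] using hr i hi
    · have hrpos := hqr i hi hqpos
      have hlog := Real.log_le_sub_one_of_pos (div_pos hrpos hqpos)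
      rw [Real.log_div hrpos.ne' hqpos.ne'] at hlog
      calc q i * Real.log (r i) - q i * Real.log (q i)
          = q i * (Real.log (r i) - Real.log (q i)) := by ring
        _ ≤ q i * (r i / q i - 1) := mul_le_mul_of_nonneg_left hlog hqpos.le
        _ = r i - q i := by field_simp
  have := Finset.sum_le_sum hterm
  rw [Finset.sum_sub_distrib, Finset.sum_sub_distrib] at this
  linarith

section pmass

variable {Ω α β : Type*} [Fintype Ω] [DecidableEq α] {p : Ω → ℝ}

theorem pmass_nonneg (hp : ∀ ω, 0 ≤ p ω) (X : Ω → α) (a : α) : 0 ≤ pmass p X a :=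
  Finset.sum_nonneg fun ω _ => by split_ifs <;> simp [hp ω]

theorem le_pmass_self (hp : ∀ ω, 0 ≤ p ω) (X : Ω → α) (ω : Ω) : p ω ≤ pmass p X (X ω) := by
  calc p ω = if X ω = X ω then p ω else 0 := (if_pos rfl).symm
    _ ≤ pmass p X (X ω) := Finset.single_le_sum (f := fun ω' => if X ω' = X ω then p ω' else 0)
      (fun ω' _ => by split_ifs <;> simp [hp ω']) (Finset.mem_univ ω)

theorem pmass_le_pmass_comp [DecidableEq β] (hp : ∀ ω, 0 ≤ p ω) (X : Ω → α) (f : α → β)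
    (a : α) : pmass p X a ≤ pmass p (fun ω => f (X ω)) (f a) :=
  Finset.sum_le_sum fun ω _ => by
    by_cases h : X ω = a
    · simp [h]
    · split_ifs <;> simp [hp ω]

theorem sum_pmass_mul [Fintype α] (p : Ω → ℝ) (X : Ω → α) (g : α → ℝ) :
    ∑ a, pmass p X a * g a = ∑ ω, p ω * g (X ω) := by
  simp only [pmass, Finset.sum_mul, ite_mul, zero_mul]
  rw [Finset.sum_comm]
  simp

theorem sum_pmass [Fintype α] (p : Ω → ℝ) (X : Ω → α) : ∑ a, pmass p X a = ∑ ω, p ω := by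
  simpa using sum_pmass_mul p X 1

theorem sum_pmass_pair_fst [Fintype α] [DecidableEq β] (p : Ω → ℝ) (X : Ω → α) (Y : Ω → β)
    (b : β) : ∑ a, pmass p (fun ω => (X ω, Y ω)) (a, b) = pmass p Y b := by
  simp only [pmass]
  rw [Finset.sum_comm]
  simp [Prod.ext_iff, ite_and]

theorem entropy_eq_neg_sum_mul_log_pmass [Fintype α] (p : Ω → ℝ) (X : Ω → α) :
    entropy p X = -∑ ω, p ω * Real.log (pmass p X (X ω)) := by
  rw [entropy, sum_pmass_mul p X fun a => Real.log (pmass p X a)]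

theorem entropy_comp_of_injective [Fintype α] [Fintype β] [DecidableEq β] (p : Ω → ℝ)
    (X : Ω → α) {f : α → β} (hf : f.Injective) :
    entropy p (fun ω => f (X ω)) = entropy p X := by
  have hmass : ∀ a, pmass p (fun ω => f (X ω)) (f a) = pmass p X a := fun a => by
    simp [pmass, hf.eq_iff]
  simp only [entropy_eq_neg_sum_mul_log_pmass, hmass]

end pmass

section mutualInfo

variable {Ω α β γ : Type*} [Fintype Ω] [DecidableEq α] [DecidableEq β] [DecidableEq γ]
  {p : Ω → ℝ}

noncomputable def condProdMass (p : Ω → ℝ) (T : Ω → γ) (Y : Ω → β) (X : Ω → α)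
    (a : γ × β × α) : ℝ :=
  pmass p (fun ω => (T ω, X ω)) (a.1, a.2.2) * pmass p (fun ω => (Y ω, X ω)) (a.2.1, a.2.2)
    / pmass p X a.2.2

theorem condProdMass_nonneg (hp : ∀ ω, 0 ≤ p ω) (T : Ω → γ) (Y : Ω → β) (X : Ω → α)
    (a : γ × β × α) : 0 ≤ condProdMass p T Y X a :=
  div_nonneg (mul_nonneg (pmass_nonneg hp _ _) (pmass_nonneg hp _ _)) (pmass_nonneg hp _ _)

theorem condProdMass_pos (hp : ∀ ω, 0 ≤ p ω) (T : Ω → γ) (Y : Ω → β) (X : Ω → α)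
    {a : γ × β × α} (ha : 0 < pmass p (fun ω => (T ω, Y ω, X ω)) a) :
    0 < condProdMass p T Y X a := by
  have hTX := ha.trans_le <|
    pmass_le_pmass_comp hp (fun ω => (T ω, Y ω, X ω)) (fun a => (a.1, a.2.2)) a
  have hYX := ha.trans_le <|
    pmass_le_pmass_comp hp (fun ω => (T ω, Y ω, X ω)) (fun a => (a.2.1, a.2.2)) a
  have hX := ha.trans_le <| pmass_le_pmass_comp hp (fun ω => (T ω, Y ω, X ω)) (·.2.2) a
  exact div_pos (mul_pos hTX hYX) hX

variable [Fintype α] [Fintype β] [Fintype γ]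

theorem sum_condProdMass (p : Ω → ℝ) (T : Ω → γ) (Y : Ω → β) (X : Ω → α) :
    ∑ a, condProdMass p T Y X a = ∑ ω, p ω := by
  calc ∑ a, condProdMass p T Y X a
      = ∑ x, (∑ t, pmass p (fun ω => (T ω, X ω)) (t, x))
          * (∑ y, pmass p (fun ω => (Y ω, X ω)) (y, x)) / pmass p X x := by
        simp only [condProdMass, Fintype.sum_prod_type, Finset.sum_mul_sum, Finset.sum_div]
        exact (Finset.sum_congr rfl fun _ _ => Finset.sum_comm).trans Finset.sum_comm
    _ = ∑ x, pmass p X x := by simp only [sum_pmass_pair_fst, mul_self_div_self]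
    _ = ∑ ω, p ω := sum_pmass p X

theorem sum_pmass_mul_log_condProdMass (hp : ∀ ω, 0 ≤ p ω) (T : Ω → γ) (Y : Ω → β)
    (X : Ω → α) :
    ∑ a, pmass p (fun ω => (T ω, Y ω, X ω)) a * Real.log (condProdMass p T Y X a)
      = entropy p X - entropy p (fun ω => (T ω, X ω)) - entropy p (fun ω => (Y ω, X ω)) := by
  simp only [sum_pmass_mul, entropy_eq_neg_sum_mul_log_pmass]
  rw [sub_neg_eq_add, sub_neg_eq_add, ← Finset.sum_neg_distrib, ← Finset.sum_add_distrib,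
    ← Finset.sum_add_distrib]
  refine Finset.sum_congr rfl fun ω _ => ?_
  rcases (hp ω).eq_or_lt with hp0 | hpos
  · simp [← hp0]
  have hTX := hpos.trans_le (le_pmass_self hp (fun ω => (T ω, X ω)) ω)
  have hYX := hpos.trans_le (le_pmass_self hp (fun ω => (Y ω, X ω)) ω)
  have hX := hpos.trans_le (le_pmass_self hp X ω)
  rw [condProdMass, Real.log_div (by positivity) hX.ne', Real.log_mul hTX.ne' hYX.ne']
  ring

theorem condMutualInfo_nonneg (hp : ∀ ω, 0 ≤ p ω) (T : Ω → γ) (Y : Ω → β) (X : Ω → α) :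
    0 ≤ condMutualInfo p T Y X := by
  have hgibbs := Real.sum_mul_log_le_sum_mul_log Finset.univ
    (q := pmass p fun ω => (T ω, Y ω, X ω)) (r := condProdMass p T Y X)
    (fun a _ => pmass_nonneg hp _ a) (fun a _ => condProdMass_nonneg hp T Y X a)
    (fun _ _ => condProdMass_pos hp T Y X) (by rw [sum_condProdMass, sum_pmass])
  rw [sum_pmass_mul_log_condProdMass hp, ← neg_neg (∑ a, _ * Real.log _), ← entropy] at hgibbs
  rw [condMutualInfo]
  linarith

theorem mutualInfo_pair_eq_add_condMutualInfo (p : Ω → ℝ) (T : Ω → γ) (Y : Ω → β)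
    (X : Ω → α) :
    mutualInfo p T (fun ω => (Y ω, X ω)) = mutualInfo p T X + condMutualInfo p T Y X := by
  simp only [mutualInfo, condMutualInfo]
  ring

theorem mutualInfo_comp_le (hp : ∀ ω, 0 ≤ p ω) (T : Ω → γ) (X : Ω → α) (f : α → β) :
    mutualInfo p T (fun ω => f (X ω)) ≤ mutualInfo p T X := by
  have hpair : mutualInfo p T (fun ω => (X ω, f (X ω))) = mutualInfo p T X := by
    have hX : entropy p (fun ω => (X ω, f (X ω))) = entropy p X :=
      entropy_comp_of_injective p X (f := fun a => (a, f a)) fun _ _ h => congrArg Prod.fst h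
    have hTX : entropy p (fun ω => (T ω, X ω, f (X ω))) = entropy p fun ω => (T ω, X ω) :=
      entropy_comp_of_injective p (fun ω => (T ω, X ω)) (f := fun a => (a.1, a.2, f a.2))
        fun _ _ h => Prod.ext (congrArg (·.1) h) (congrArg (·.2.1) h)
    rw [mutualInfo, mutualInfo, hX, hTX]
  have := mutualInfo_pair_eq_add_condMutualInfo p T X fun ω => f (X ω)
  have := condMutualInfo_nonneg hp T X fun ω => f (X ω)
  linarith

end mutualInfo

section iteration

variable {Ω V G γ : Type*} [Fintype Ω] [Fintype V] [DecidableEq V] [Fintype G] [DecidableEq G]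
  [Fintype γ] [DecidableEq γ] {p : Ω → ℝ}

theorem mutualInfo_update_le (hp : ∀ ω, 0 ≤ p ω) (T : Ω → γ) {Z X : Ω → V} {Y : Ω → G}
    (u : V → G → V) (hZ : ∀ ω, Z ω = u (X ω) (Y ω)) :
    mutualInfo p T Z ≤ mutualInfo p T X + condMutualInfo p T Y X := by
  have hZ' : Z = fun ω => (fun yx : G × V => u yx.2 yx.1) (Y ω, X ω) := funext hZ
  rw [hZ', ← mutualInfo_pair_eq_add_condMutualInfo]
  exact mutualInfo_comp_le hp T (fun ω => (Y ω, X ω)) fun yx => u yx.2 yx.1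

theorem mutualInfo_last_le_add_sum_condMutualInfo (hp : ∀ ω, 0 ≤ p ω) (T : Ω → γ) :
    ∀ {n : ℕ} (θ : Fin (n + 1) → Ω → V) (ghat : Fin n → Ω → G),
      (∀ i : Fin n, ∃ u : V → G → V, ∀ ω, θ i.succ ω = u (θ i.castSucc ω) (ghat i ω)) →
      mutualInfo p T (θ (Fin.last n))
        ≤ mutualInfo p T (θ 0) + ∑ i, condMutualInfo p T (ghat i) (θ i.castSucc)
  | 0, θ, _, _ => by simp
  | n + 1, θ, ghat, hupdate => by
    obtain ⟨u, hu⟩ := hupdate (Fin.last n)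
    have ih := mutualInfo_last_le_add_sum_condMutualInfo hp T (fun i => θ i.castSucc)
      (fun i => ghat i.castSucc) fun i => by simpa [← Fin.succ_castSucc] using hupdate i.castSucc
    calc mutualInfo p T (θ (Fin.last (n + 1)))
        ≤ mutualInfo p T (θ (Fin.last n).castSucc)
          + condMutualInfo p T (ghat (Fin.last n)) (θ (Fin.last n).castSucc) :=
          mutualInfo_update_le hp T u (by simpa using hu)
      _ ≤ mutualInfo p T (θ 0) + ∑ i, condMutualInfo p T (ghat i) (θ i.castSucc) := by
          rw [Fin.sum_univ_castSucc]
          simp only [Fin.castSucc_zero] at ih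
          linarith

end iteration

theorem sgd_membership_disclosure_bound_general {Ω V G W : Type*} [Fintype Ω]
    [Fintype V] [DecidableEq V] [Fintype G] [DecidableEq G] [Fintype W] [DecidableEq W]
    (p : Ω → ℝ) (hp : ∀ ω, 0 ≤ p ω)
    (T : Ω → Bool) (Nr : ℕ)
    (θ : Fin (Nr + 1) → Ω → V) (ghat : Fin Nr → Ω → G)
    (hupdate : ∀ i : Fin Nr, ∃ u : V → G → V,
      ∀ ω, θ i.succ ω = u (θ i.castSucc ω) (ghat i ω))
    (hinit : mutualInfo p T (θ 0) = 0)
    (F : V → W) :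
    mutualInfo p T (fun ω => F (θ (Fin.last Nr) ω))
      ≤ ∑ i : Fin Nr, condMutualInfo p T (ghat i) (θ i.castSucc) := by
  calc mutualInfo p T (fun ω => F (θ (Fin.last Nr) ω))
      ≤ mutualInfo p T (θ (Fin.last Nr)) := mutualInfo_comp_le hp T _ F
    _ ≤ mutualInfo p T (θ 0) + ∑ i, condMutualInfo p T (ghat i) (θ i.castSucc) :=
      mutualInfo_last_le_add_sum_condMutualInfo hp T θ ghat hupdate
    _ = ∑ i, condMutualInfo p T (ghat i) (θ i.castSucc) := by rw [hinit, zero_add]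

/-- (Per-iteration disclosure bound for mini-batch SGD.) If each
`θ_{i+1}` is a deterministic function of `(θ_i, ghat_i)` and the initialization `θ 0` is
independent of the membership bit `T` (i.e. `I[T; θ 0] = 0`), then for any attacker
function `F` applied to the final parameters,
`I[T; F (θ_{N_r})] ≤ ∑_{i<N_r} I[T; ghat_i ∣ θ_i]`. -/
theorem sgd_membership_disclosure_bound {Ω V G W : Type*} [Fintype Ω]
    [Fintype V] [DecidableEq V] [Fintype G] [DecidableEq G] [Fintype W] [DecidableEq W]
    (p : Ω → ℝ) (hp : ∀ ω, 0 ≤ p ω) (hp1 : ∑ ω, p ω = 1)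
    (T : Ω → Bool) (Nr : ℕ)
    (θ : Fin (Nr + 1) → Ω → V) (ghat : Fin Nr → Ω → G)
    (hupdate : ∀ i : Fin Nr, ∃ u : V → G → V,
      ∀ ω, θ i.succ ω = u (θ i.castSucc ω) (ghat i ω))
    (hinit : mutualInfo p T (θ 0) = 0)
    (F : V → W) :
    mutualInfo p T (fun ω => F (θ (Fin.last Nr) ω))
      ≤ ∑ i : Fin Nr, condMutualInfo p T (ghat i) (θ i.castSucc) :=
  sgd_membership_disclosure_bound_general p hp T Nr θ ghat hupdate hinit F
end
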